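/- For constant DMSs γ_X ≡ (X, d_X) and γ_Y ≡ (Y, d_Y) (i.e., d_X(t) = d_X and d_Y(t) = d_Y for all t), the slack interleaving distance d_dyn(γ_X, γ_Y) equals the Gromov–Hausdorff distance d_GH((X,d_X),(Y,d_Y)). -/
import Mathlib


namespace Stmt2

open scoped Pointwise

lemma vee_const_aux {X : Type} (d : X → X → ℝ) {a b : ℝ} (h : a ≤ b) (x x' : X) :
    sInf ((fun s => (fun _ : ℝ => d) s x x') '' Set.Icc a b) = d x x' := by
  have : (fun s => (fun _ : ℝ => d) s x x') '' Set.Icc a b = {d x x'} :=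
    Set.Nonempty.image_const ⟨a, Set.left_mem_Icc.2 h⟩ _
  rw [this, csInf_singleton]

/-- `(⋁_{[a,b]} d)(x,x')`. -/
noncomputable def vee {X : Type} (d : ℝ → X → X → ℝ) (a b : ℝ) (x x' : X) : ℝ :=
  sInf ((fun s => d s x x') '' Set.Icc a b)

/-- `R = (Z, pX, pY)` is an `ε`-tripod between the DMSs `dX` and `dY`. -/
def IsEpsTripod {X Y Z : Type} (dX : ℝ → X → X → ℝ) (dY : ℝ → Y → Y → ℝ)
    (pX : Z → X) (pY : Z → Y) (ε : ℝ) : Prop :=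
  Function.Surjective pX ∧ Function.Surjective pY ∧
  ∀ t : ℝ, ∀ z z' : Z,
    vee dX (t - ε) (t + ε) (pX z) (pX z') ≤ dY t (pY z) (pY z') + 2 * ε ∧
    vee dY (t - ε) (t + ε) (pY z) (pY z') ≤ dX t (pX z) (pX z') + 2 * ε

/-- The (2-)slack interleaving distance `d_dyn` between DMSs. -/
noncomputable def ddyn {X Y : Type} (dX : ℝ → X → X → ℝ) (dY : ℝ → Y → Y → ℝ) : ℝ :=
  sInf {ε : ℝ | 0 ≤ ε ∧ ∃ (Z : Type) (pX : Z → X) (pY : Z → Y),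
    IsEpsTripod dX dY pX pY ε}

/-- The Gromov–Hausdorff distance between (pseudo-)metric spaces, via tripods. -/
noncomputable def dGH {X Y : Type} (dX : X → X → ℝ) (dY : Y → Y → ℝ) : ℝ :=
  (1 / 2) * sInf {c : ℝ | 0 ≤ c ∧ ∃ (Z : Type) (pX : Z → X) (pY : Z → Y),
    Function.Surjective pX ∧ Function.Surjective pY ∧
    ∀ z z' : Z, |dX (pX z) (pX z') - dY (pY z) (pY z')| ≤ c}

/-- for constant DMSs, `d_dyn` equals the Gromov–Hausdorff distance. -/
theorem ddyn_constant_eq_dGH {X Y : Type} [Fintype X] [Nonempty X] [Fintype Y] [Nonempty Y]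
    (dX : X → X → ℝ) (dY : Y → Y → ℝ)
    (hXnn : ∀ x x', 0 ≤ dX x x') (hXrefl : ∀ x, dX x x = 0)
    (hXsymm : ∀ x x', dX x x' = dX x' x)
    (hXtri : ∀ x x' x'', dX x x'' ≤ dX x x' + dX x' x'')
    (hYnn : ∀ y y', 0 ≤ dY y y') (hYrefl : ∀ y, dY y y = 0)
    (hYsymm : ∀ y y', dY y y' = dY y' y)
    (hYtri : ∀ y y' y'', dY y y'' ≤ dY y y' + dY y' y'') :
    ddyn (fun _ : ℝ => dX) (fun _ : ℝ => dY) = dGH dX dY := by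
  have hset : {ε : ℝ | 0 ≤ ε ∧ ∃ (Z : Type) (pX : Z → X) (pY : Z → Y),
        IsEpsTripod (fun _ : ℝ => dX) (fun _ : ℝ => dY) pX pY ε}
      = (1/2 : ℝ) • {c : ℝ | 0 ≤ c ∧ ∃ (Z : Type) (pX : Z → X) (pY : Z → Y),
        Function.Surjective pX ∧ Function.Surjective pY ∧
        ∀ z z' : Z, |dX (pX z) (pX z') - dY (pY z) (pY z')| ≤ c} := by
    ext ε
    rw [Set.mem_smul_set_iff_inv_smul_mem₀ (by norm_num : (1/2:ℝ) ≠ 0)]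
    have h2 : (1/2 : ℝ)⁻¹ • ε = 2 * ε := by
      rw [smul_eq_mul]; ring_nf
    rw [h2]
    simp only [Set.mem_setOf_eq]
    constructor
    · rintro ⟨hε, Z, pX, pY, hsX, hsY, h⟩
      refine ⟨by linarith, Z, pX, pY, hsX, hsY, fun z z' => ?_⟩
      obtain ⟨h1, h2'⟩ := h 0 z z'
      have hab : (0:ℝ) - ε ≤ 0 + ε := by linarith
      rw [vee, vee_const_aux dX hab] at h1
      rw [vee, vee_const_aux dY hab] at h2'
      rw [abs_sub_le_iff]
      constructor <;> linarith
    · rintro ⟨hε, Z, pX, pY, hsX, hsY, h⟩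
      refine ⟨by linarith, Z, pX, pY, hsX, hsY, fun t z z' => ?_⟩
      have hab : t - ε ≤ t + ε := by linarith
      have := h z z'
      rw [abs_sub_le_iff] at this
      constructor
      · rw [vee, vee_const_aux dX hab]; linarith [this.1]
      · rw [vee, vee_const_aux dY hab]; linarith [this.2]
  rw [ddyn, dGH, hset, Real.sInf_smul_of_nonneg (by norm_num : (0:ℝ) ≤ 1/2), smul_eq_mul]

end Stmt2
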